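/- Define 𝒜y := Σ_k Σ_{j=1}^{r_k} μ_{k,j}⁻¹ (u_{k,j}^H · (⟨y_n,f_k^n⟩)_n) ((v_{k,j})_m ẽ_k^m)_m using singular systems (μ_{k,j}, u_{k,j}, v_{k,j}) of the matrices Λ_k. If the Picard condition Σ_k Σ_{j=1}^{r_k} μ_{k,j}⁻² |(⟨y_n,f_k^n⟩)_n|² < ∞ holds, then 𝒜y is a well-defined element of X with ‖𝒜y‖²_X ≤ B1⁻¹ Σ_k Σ_j μ_{k,j}⁻² |(⟨y_n,f_k^n⟩)_n|². -/

import Mathlib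

open scoped ComplexInnerProductSpace

/-! The dual frame `(T e_k)` is a Bessel sequence with bound `B1⁻¹`: `T` is self-adjoint because
the frame operator `S` is, so `∑ |⟪T e_k, x⟫|² = ∑ |⟪e_k, T x⟫|² = re ⟪T x, x⟫ ≤ ‖T x‖ ‖x‖`, while
the lower frame bound gives `B1 ‖T x‖² ≤ re ⟪T x, x⟫`. By Cauchy–Schwarz a Bessel sequence with
bound `B` turns every square-summable coefficient sequence `a` into a convergent series with
`‖∑ a_k g_k‖² ≤ B ∑ |a_k|²`. The coefficients of `𝒜y` at `k` are the coordinates of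
`∑_j μ_{k,j}⁻¹ ⟪u_{k,j}, W_k⟫ v_{k,j}`, whose squared norm is `∑_j μ_{k,j}⁻² |⟪u_{k,j}, W_k⟫|²`
by orthonormality of the `v_{k,j}`, and this is at most `∑_j μ_{k,j}⁻² ‖W_k‖²`. -/

section Bessel

variable {E : Type*} [NormedAddCommGroup E] [InnerProductSpace ℂ E]

def IsBesselSeq (g : ℕ → E) (B : ℝ) : Prop :=
  ∀ x : E, Summable (fun k => ‖⟪g k, x⟫‖ ^ 2) ∧ ∑' k, ‖⟪g k, x⟫‖ ^ 2 ≤ B * ‖x‖ ^ 2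

namespace IsBesselSeq

variable {g : ℕ → E} {B : ℝ}

theorem norm_sum_smul_sq_le (hg : IsBesselSeq g B) (hB : 0 ≤ B) (a : ℕ → ℂ) (F : Finset ℕ) :
    ‖∑ k ∈ F, a k • g k‖ ^ 2 ≤ B * ∑ k ∈ F, ‖a k‖ ^ 2 := by
  set s := ∑ k ∈ F, a k • g k
  have hs : ‖s‖ ^ 2 ≤ ∑ k ∈ F, ‖a k‖ * ‖⟪g k, s⟫‖ := calc
    ‖s‖ ^ 2 = ‖⟪s, s⟫‖ := by rw [inner_self_eq_norm_sq_to_K]; simp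
    _ = ‖∑ k ∈ F, (starRingEnd ℂ) (a k) * ⟪g k, s⟫‖ := by
      simp only [s, sum_inner, inner_smul_left]
    _ ≤ ∑ k ∈ F, ‖a k‖ * ‖⟪g k, s⟫‖ := by
      refine (norm_sum_le _ _).trans_eq (Finset.sum_congr rfl fun k _ => ?_)
      rw [norm_mul, RCLike.norm_conj]
  have hbessel : ∑ k ∈ F, ‖⟪g k, s⟫‖ ^ 2 ≤ B * ‖s‖ ^ 2 :=
    ((hg s).1.sum_le_tsum F fun k _ => sq_nonneg _).trans (hg s).2
  have hq : 0 ≤ ∑ k ∈ F, ‖a k‖ ^ 2 := Finset.sum_nonneg fun _ _ => sq_nonneg _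
  have hcs : (‖s‖ ^ 2) ^ 2 ≤ (∑ k ∈ F, ‖a k‖ ^ 2) * (B * ‖s‖ ^ 2) :=
    (pow_le_pow_left₀ (sq_nonneg _) hs 2).trans <|
      (Finset.sum_mul_sq_le_sq_mul_sq F _ _).trans (mul_le_mul_of_nonneg_left hbessel hq)
  nlinarith [sq_nonneg ‖s‖, mul_nonneg hB hq]

theorem exists_hasSum_smul [CompleteSpace E] (hg : IsBesselSeq g B) (hB : 0 ≤ B) {a : ℕ → ℂ}
    (ha : Summable fun k => ‖a k‖ ^ 2) :
    ∃ z : E, HasSum (fun k => a k • g k) z ∧ ‖z‖ ^ 2 ≤ B * ∑' k, ‖a k‖ ^ 2 := by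
  have hsum : Summable fun k => a k • g k := by
    refine summable_iff_vanishing_norm.mpr fun ε hε => ?_
    obtain ⟨F, hF⟩ := summable_iff_vanishing_norm.mp ha (ε ^ 2 / (B + 1)) (by positivity)
    refine ⟨F, fun t ht => ?_⟩
    have htail : ∑ k ∈ t, ‖a k‖ ^ 2 < ε ^ 2 / (B + 1) :=
      (Real.le_norm_self _).trans_lt (hF t ht)
    have : ‖∑ k ∈ t, a k • g k‖ ^ 2 < ε ^ 2 := calc
      _ ≤ B * ∑ k ∈ t, ‖a k‖ ^ 2 := hg.norm_sum_smul_sq_le hB a t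
      _ ≤ B * (ε ^ 2 / (B + 1)) := mul_le_mul_of_nonneg_left htail.le hB
      _ < ε ^ 2 := by rw [mul_div_assoc', div_lt_iff₀ (by positivity)]; nlinarith
    exact lt_of_pow_lt_pow_left₀ 2 hε.le this
  refine ⟨_, hsum.hasSum, le_of_tendsto' (hsum.hasSum.norm.pow 2) fun F => ?_⟩
  exact (hg.norm_sum_smul_sq_le hB a F).trans <|
    mul_le_mul_of_nonneg_left (ha.sum_le_tsum F fun k _ => sq_nonneg _) hB

end IsBesselSeq

end Bessel

theorem PiLp.exists_hasSum_smul_of_isBesselSeq {ι : Type*} [Fintype ι] {E : ι → Type*}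
    [∀ i, NormedAddCommGroup (E i)] [∀ i, InnerProductSpace ℂ (E i)] [∀ i, CompleteSpace (E i)]
    {g : ∀ i, ℕ → E i} {B : ℝ} (hg : ∀ i, IsBesselSeq (g i) B) (hB : 0 ≤ B)
    {a : ι → ℕ → ℂ} {b : ℕ → ℝ} (hab : ∀ k, ∑ i, ‖a i k‖ ^ 2 ≤ b k) (hb : Summable b) :
    ∃ z : PiLp 2 E, (∀ i, HasSum (fun k => a i k • g i k) (z i)) ∧
      ‖z‖ ^ 2 ≤ B * ∑' k, b k := by
  have ha : ∀ i, Summable fun k => ‖a i k‖ ^ 2 := fun i =>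
    hb.of_nonneg_of_le (fun k => sq_nonneg _) fun k =>
      (Finset.single_le_sum (fun j _ => sq_nonneg ‖a j k‖) (Finset.mem_univ i)).trans (hab k)
  choose z hz hzB using fun i => (hg i).exists_hasSum_smul hB (ha i)
  refine ⟨WithLp.toLp 2 z, hz, ?_⟩
  calc ‖WithLp.toLp 2 z‖ ^ 2 = ∑ i, ‖z i‖ ^ 2 := PiLp.norm_sq_eq_of_L2 E _
    _ ≤ ∑ i, B * ∑' k, ‖a i k‖ ^ 2 := Finset.sum_le_sum fun i _ => hzB i
    _ = B * ∑' k, ∑ i, ‖a i k‖ ^ 2 := by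
      rw [← Finset.mul_sum, Summable.tsum_finsetSum fun i _ => ha i]
    _ ≤ B * ∑' k, b k := by
      refine mul_le_mul_of_nonneg_left (Summable.tsum_le_tsum hab ?_ hb) hB
      exact hb.of_nonneg_of_le (fun k => Finset.sum_nonneg fun i _ => sq_nonneg _) hab

section FrameOperator

variable {E : Type*} [NormedAddCommGroup E] [InnerProductSpace ℂ E]

def IsFrameOperator (e : ℕ → E) (S : E →L[ℂ] E) : Prop :=
  ∀ x, HasSum (fun k => ⟪e k, x⟫ • e k) (S x)

variable {e : ℕ → E} {S : E →L[ℂ] E}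

theorem IsFrameOperator.hasSum_inner (hS : IsFrameOperator e S)
    (x y : E) : HasSum (fun k => ⟪y, e k⟫ * ⟪e k, x⟫) ⟪y, S x⟫ := by
  simpa [inner_smul_right, mul_comm] using (hS x).mapL (innerSL ℂ y)

theorem IsFrameOperator.hasSum_norm_sq_inner (hS : IsFrameOperator e S)
    (x : E) : HasSum (fun k => ‖⟪e k, x⟫‖ ^ 2) (RCLike.re ⟪x, S x⟫) := by
  have := Complex.hasSum_re (hS.hasSum_inner x x)
  simp_rw [← inner_conj_symm x (e _), RCLike.conj_mul] at this
  exact_mod_cast this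

theorem IsFrameOperator.isSymmetric (hS : IsFrameOperator e S) :
    (S : E →ₗ[ℂ] E).IsSymmetric := fun x y => by
  have h := (hS.hasSum_inner x y).star
  simp only [RCLike.star_def, map_mul, inner_conj_symm] at h
  rw [ContinuousLinearMap.coe_coe]
  exact h.unique (by simpa only [mul_comm] using hS.hasSum_inner y x)

theorem isBesselSeq_dualFrame {T : E →L[ℂ] E} {B1 : ℝ} (hB1 : 0 < B1)
    (hlower : ∀ x, B1 * ‖x‖ ^ 2 ≤ ∑' k, ‖⟪e k, x⟫‖ ^ 2)
    (hS : IsFrameOperator e S) (hST : S ∘L T = 1) :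
    IsBesselSeq (fun k => T (e k)) B1⁻¹ := by
  have hSTx : ∀ x, S (T x) = x := fun x => congr($hST x)
  have hT : ∀ a b, ⟪T a, b⟫ = ⟪a, T b⟫ := fun a b => by
    simpa only [hSTx] using (hS.isSymmetric.apply_clm (T a) (T b)).symm
  intro x
  have hP : HasSum (fun k => ‖⟪e k, T x⟫‖ ^ 2) (RCLike.re ⟪T x, x⟫) := by
    simpa only [hSTx] using hS.hasSum_norm_sq_inner (T x)
  have hupper : RCLike.re ⟪T x, x⟫ ≤ ‖T x‖ * ‖x‖ := re_inner_le_norm _ _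
  have hlow : B1 * ‖T x‖ ^ 2 ≤ RCLike.re ⟪T x, x⟫ := hP.tsum_eq ▸ hlower (T x)
  have hTx : B1 * ‖T x‖ ≤ ‖x‖ := by nlinarith [norm_nonneg (T x), norm_nonneg x]
  simp only [hT]
  refine ⟨hP.summable, ?_⟩
  rw [hP.tsum_eq, inv_mul_eq_div, le_div_iff₀ hB1]
  nlinarith [norm_nonneg (T x), norm_nonneg x]

end FrameOperator

theorem Orthonormal.norm_sum_smul_sq {𝕜 E ι : Type*} [RCLike 𝕜] [NormedAddCommGroup E]
    [InnerProductSpace 𝕜 E] [Fintype ι] {v : ι → E} (hv : Orthonormal 𝕜 v) (l : ι → 𝕜) :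
    ‖∑ i, l i • v i‖ ^ 2 = ∑ i, ‖l i‖ ^ 2 := by
  apply RCLike.ofReal_injective (K := 𝕜)
  push_cast
  rw [← inner_self_eq_norm_sq_to_K, hv.inner_sum]
  exact Finset.sum_congr rfl fun i _ => RCLike.conj_mul (l i)

theorem picard_condition_well_definedness_general
    {M N : ℕ}
    {Xs : Fin M → Type*} [∀ m, NormedAddCommGroup (Xs m)]
    [∀ m, InnerProductSpace ℂ (Xs m)] [∀ m, CompleteSpace (Xs m)]
    (e : ∀ m, ℕ → Xs m)
    (B1 B2 : ℝ) (hB1 : 0 < B1)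
    (hframe_e : ∀ (m) (x : Xs m), (Summable fun k => ‖⟪e m k, x⟫‖ ^ 2) ∧
      B1 * ‖x‖ ^ 2 ≤ ∑' k, ‖⟪e m k, x⟫‖ ^ 2 ∧ ∑' k, ‖⟪e m k, x⟫‖ ^ 2 ≤ B2 * ‖x‖ ^ 2)
    -- the frame operators `S m` of the frames `e m` and their inverses `T m`,
    -- giving the dual frames `ẽ m k := T m (e m k)`
    (S T : ∀ m, Xs m →L[ℂ] Xs m)
    (hS : ∀ (m) (x : Xs m), HasSum (fun k => ⟪e m k, x⟫ • e m k) (S m x))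
    (hST : ∀ m, S m ∘L T m = 1)
    -- singular systems of the matrices `Λ k`
    (r : ℕ → ℕ)
    (μ : ∀ k, Fin (r k) → ℝ)
    (u : ∀ k, Fin (r k) → EuclideanSpace ℂ (Fin N))
    (v : ∀ k, Fin (r k) → EuclideanSpace ℂ (Fin M))
    (hu : ∀ k, Orthonormal ℂ (u k)) (hv : ∀ k, Orthonormal ℂ (v k))
    (W : ℕ → EuclideanSpace ℂ (Fin N))
    (hPicard : Summable fun k => ∑ j, ((μ k j) ^ 2)⁻¹ * ‖W k‖ ^ 2) :
    ∃ z : PiLp 2 Xs,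
      (∀ m, HasSum
        (fun k => (∑ j, ((μ k j : ℝ) : ℂ)⁻¹ * ⟪u k j, W k⟫ * v k j m) • T m (e m k))
        (z m)) ∧
      ‖z‖ ^ 2 ≤ B1⁻¹ * ∑' k, ∑ j, ((μ k j) ^ 2)⁻¹ * ‖W k‖ ^ 2 := by
  have hcoef : ∀ k j, ‖((μ k j : ℝ) : ℂ)⁻¹ * ⟪u k j, W k⟫‖ ^ 2 ≤ ((μ k j) ^ 2)⁻¹ * ‖W k‖ ^ 2 :=
    fun k j => by
      have := norm_inner_le_norm (𝕜 := ℂ) (u k j) (W k)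
      rw [(hu k).norm_eq_one, one_mul] at this
      rw [norm_mul, mul_pow, norm_inv, Complex.norm_real, Real.norm_eq_abs, inv_pow, sq_abs]
      gcongr
  have hsum : ∀ k, ∑ m, ‖∑ j, ((μ k j : ℝ) : ℂ)⁻¹ * ⟪u k j, W k⟫ * v k j m‖ ^ 2 ≤
      ∑ j, ((μ k j) ^ 2)⁻¹ * ‖W k‖ ^ 2 := fun k => calc
    _ = ‖∑ j, (((μ k j : ℝ) : ℂ)⁻¹ * ⟪u k j, W k⟫) • v k j‖ ^ 2 := by
      simp [EuclideanSpace.norm_sq_eq, WithLp.ofLp_sum]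
    _ = ∑ j, ‖((μ k j : ℝ) : ℂ)⁻¹ * ⟪u k j, W k⟫‖ ^ 2 := (hv k).norm_sum_smul_sq _
    _ ≤ _ := Finset.sum_le_sum fun j _ => hcoef k j
  exact PiLp.exists_hasSum_smul_of_isBesselSeq
    (fun m => isBesselSeq_dualFrame hB1 (fun x => (hframe_e m x).2.1) (hS m) (hST m))
    (inv_nonneg.2 hB1.le) hsum hPicard

/-- Picard condition and well-definedness of `𝒜y`: using singular systems
`(μ k j, u k j, v k j)` of the matrices `Λ k`, if
`∑_k ∑_j μ_{k,j}⁻² ‖(⟪f n k, y n⟫)_n‖² < ∞` then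
`𝒜y := ∑_k ∑_j μ_{k,j}⁻¹ (u_{k,j}ᴴ ⬝ W k)((v_{k,j})_m • ẽ m k)_m` is a well-defined
element of `X` with `‖𝒜y‖² ≤ B1⁻¹ ∑_k ∑_j μ_{k,j}⁻² ‖W k‖²`. -/
theorem picard_condition_well_definedness
    {M N : ℕ}
    {Xs : Fin M → Type*} [∀ m, NormedAddCommGroup (Xs m)]
    [∀ m, InnerProductSpace ℂ (Xs m)] [∀ m, CompleteSpace (Xs m)]
    {Ys : Fin N → Type*} [∀ n, NormedAddCommGroup (Ys n)]
    [∀ n, InnerProductSpace ℂ (Ys n)] [∀ n, CompleteSpace (Ys n)]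
    (A : PiLp 2 Xs →L[ℂ] PiLp 2 Ys)
    (e : ∀ m, ℕ → Xs m) (f : ∀ n, ℕ → Ys n)
    (B1 B2 C1 C2 : ℝ) (hB1 : 0 < B1) (hB2 : 0 < B2) (hC1 : 0 < C1) (hC2 : 0 < C2)
    (hframe_e : ∀ (m) (x : Xs m), (Summable fun k => ‖⟪e m k, x⟫‖ ^ 2) ∧
      B1 * ‖x‖ ^ 2 ≤ ∑' k, ‖⟪e m k, x⟫‖ ^ 2 ∧ ∑' k, ‖⟪e m k, x⟫‖ ^ 2 ≤ B2 * ‖x‖ ^ 2)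
    (hframe_f : ∀ (n) (y : Ys n), (Summable fun k => ‖⟪f n k, y⟫‖ ^ 2) ∧
      C1 * ‖y‖ ^ 2 ≤ ∑' k, ‖⟪f n k, y⟫‖ ^ 2 ∧ ∑' k, ‖⟪f n k, y⟫‖ ^ 2 ≤ C2 * ‖y‖ ^ 2)
    -- the frame operators `S m` of the frames `e m` and their inverses `T m`,
    -- giving the dual frames `ẽ m k := T m (e m k)`
    (S T : ∀ m, Xs m →L[ℂ] Xs m)
    (hS : ∀ (m) (x : Xs m), HasSum (fun k => ⟪e m k, x⟫ • e m k) (S m x))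
    (hST : ∀ m, S m ∘L T m = 1) (hTS : ∀ m, T m ∘L S m = 1)
    (Λ : ℕ → Matrix (Fin N) (Fin M) ℂ)
    (hΛ : ∀ (k : ℕ) (x : PiLp 2 Xs) (n : Fin N),
      ⟪f n k, A x n⟫ = ∑ m, Λ k n m * ⟪e m k, x m⟫)
    -- singular systems of the matrices `Λ k`
    (r : ℕ → ℕ)
    (μ : ∀ k, Fin (r k) → ℝ)
    (u : ∀ k, Fin (r k) → EuclideanSpace ℂ (Fin N))
    (v : ∀ k, Fin (r k) → EuclideanSpace ℂ (Fin M))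
    (hμ : ∀ k j, 0 < μ k j)
    (hu : ∀ k, Orthonormal ℂ (u k)) (hv : ∀ k, Orthonormal ℂ (v k))
    (hSVD : ∀ (k : ℕ) (h : EuclideanSpace ℂ (Fin M)),
      (Λ k).mulVec (fun m => h m) =
        fun n => ∑ j, (μ k j : ℂ) * ⟪v k j, h⟫ * u k j n)
    (y : PiLp 2 Ys)
    (W : ℕ → EuclideanSpace ℂ (Fin N))
    (hW : ∀ k n, W k n = ⟪f n k, y n⟫)
    (hPicard : Summable fun k => ∑ j, ((μ k j) ^ 2)⁻¹ * ‖W k‖ ^ 2) :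
    ∃ z : PiLp 2 Xs,
      (∀ m, HasSum
        (fun k => (∑ j, ((μ k j : ℝ) : ℂ)⁻¹ * ⟪u k j, W k⟫ * v k j m) • T m (e m k))
        (z m)) ∧
      ‖z‖ ^ 2 ≤ B1⁻¹ * ∑' k, ∑ j, ((μ k j) ^ 2)⁻¹ * ‖W k‖ ^ 2 :=
  picard_condition_well_definedness_general e B1 B2 hB1 hframe_e S T hS hST r μ u v hu hv W hPicard
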